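/- Let G = (S ∪ K, E) be a split graph with no isolated vertices, where S is an independent set, K is a clique, and K is a maximum clique of G with |K| = q = ω(G). Let π = {V_1, V_2, ..., V_p} be a total transitive partition of G. Then there exists a subset K' ⊆ K such that K' dominates S (every vertex of S is adjacent to a vertex of K'), all vertices of K' belong to V_1, and 1 ≤ |K'| ≤ q - p + 1. -/

import Mathlib

/-!
Every part `V_i` dominates itself, so it contains a vertex of `K`: a vertex of the independent
set `S` can only be dominated from `K`. Choosing one such vertex in each part gives `p` distinct
vertices of `K`, so `K ∩ V_1` has at most `q - (p - 1)` elements. It is nonempty and dominates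
`S`, because `V_1` dominates every vertex and the neighbours of `S` lie in `K`.
-/

open Set

/-- A total transitive partition of `G` into `k` parts: the parts are nonempty, they
partition the vertex set, and `V_i` dominates `V_j` for all `i ≤ j`. -/
def TTPartition {V : Type*} (G : SimpleGraph V) (k : ℕ) (P : Fin k → Set V) : Prop :=
  (∀ i, (P i).Nonempty) ∧
  (∀ v : V, ∃! i, v ∈ P i) ∧
  (∀ i j : Fin k, i ≤ j → ∀ v ∈ P j, ∃ u ∈ P i, G.Adj u v)

section

variable {V : Type*} {G : SimpleGraph V} {S K : Set V}

theorem mem_of_adj_of_mem_indep (hcover : S ∪ K = univ) (hS : ∀ u ∈ S, ∀ v ∈ S, ¬G.Adj u v)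
    {u v : V} (hv : v ∈ S) (huv : G.Adj u v) : u ∈ K :=
  (hcover ▸ mem_univ u : u ∈ S ∪ K).resolve_left fun hu => hS u hu v hv huv

namespace TTPartition

variable {k : ℕ} {P : Fin k → Set V}

theorem eq_of_mem (hP : TTPartition G k P) {v : V} {i j : Fin k} (hi : v ∈ P i)
    (hj : v ∈ P j) : i = j :=
  (hP.2.1 v).unique hi hj

theorem exists_adj_mem_zero (hP : TTPartition G k P) (hk : 1 ≤ k) (v : V) :
    ∃ u ∈ P ⟨0, hk⟩, G.Adj u v := by
  obtain ⟨j, hj, -⟩ := hP.2.1 v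
  exact hP.2.2 _ j (Fin.mk_le_of_le_val (Nat.zero_le _)) v hj

theorem inter_nonempty (hP : TTPartition G k P) (hcover : S ∪ K = univ)
    (hS : ∀ u ∈ S, ∀ v ∈ S, ¬G.Adj u v) (i : Fin k) : (K ∩ P i).Nonempty := by
  obtain ⟨v, hv⟩ := hP.1 i
  obtain ⟨u, hu, huv⟩ := hP.2.2 i i le_rfl v hv
  by_cases hvS : v ∈ S
  · exact ⟨u, mem_of_adj_of_mem_indep hcover hS hvS huv, hu⟩
  · exact ⟨v, (hcover ▸ mem_univ v : v ∈ S ∪ K).resolve_left hvS, hv⟩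

theorem ncard_inter_add_le [Finite V] (hP : TTPartition G k P) (hK : ∀ j, (K ∩ P j).Nonempty)
    (i : Fin k) : (K ∩ P i).ncard + (k - 1) ≤ K.ncard := by
  choose f hf using hK
  have hf_inj : Function.Injective f := fun a b hab => hP.eq_of_mem (hf a).2 (hab ▸ (hf b).2)
  have hdisj : Disjoint (K ∩ P i) (f '' {i}ᶜ) := by
    refine disjoint_left.2 ?_
    rintro v ⟨-, hv⟩ ⟨j, hj, rfl⟩
    exact hj (hP.eq_of_mem (hf j).2 hv)
  calc (K ∩ P i).ncard + (k - 1) = (K ∩ P i).ncard + (f '' {i}ᶜ).ncard := by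
        rw [ncard_image_of_injective _ hf_inj, ncard_compl, ncard_singleton, Nat.card_fin]
    _ = ((K ∩ P i) ∪ f '' {i}ᶜ).ncard := (ncard_union_eq hdisj).symm
    _ ≤ K.ncard :=
        ncard_le_ncard (union_subset inter_subset_left (image_subset_iff.2 fun j _ => (hf j).1))

end TTPartition

end

theorem stmt15_general {V : Type*} [Fintype V] (G : SimpleGraph V)
    (S K : Set V) (hcover : S ∪ K = Set.univ)
    (hS : ∀ u ∈ S, ∀ v ∈ S, ¬ G.Adj u v)
    (q : ℕ) (hq : q = K.ncard)
    (p : ℕ) (hp1 : 1 ≤ p)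
    (P : Fin p → Set V) (hP : TTPartition G p P) :
    ∃ K' : Set V, K' ⊆ K ∧ (∀ s ∈ S, ∃ t ∈ K', G.Adj t s) ∧
      K' ⊆ P ⟨0, hp1⟩ ∧ 1 ≤ K'.ncard ∧ K'.ncard ≤ q - p + 1 := by
  set K₀ := K ∩ P ⟨0, hp1⟩
  have hmeet := hP.inter_nonempty hcover hS
  have hpos : 0 < K₀.ncard := (ncard_pos (s := K₀)).2 (hmeet _)
  refine ⟨K₀, inter_subset_left, ?_, inter_subset_right, hpos, ?_⟩
  · intro s hs
    obtain ⟨u, hu, hus⟩ := hP.exists_adj_mem_zero hp1 s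
    exact ⟨u, ⟨mem_of_adj_of_mem_indep hcover hS hs hus, hu⟩, hus⟩
  · have hle : K₀.ncard + (p - 1) ≤ K.ncard := hP.ncard_inter_add_le hmeet _
    omega

/-- For a split graph `G` (with `K` a maximum clique of size `q`) and a total transitive
partition `{V_1, …, V_p}` of `G` (with `1 ≤ p ≤ q - 1`), there exists `K' ⊆ K`
dominating `S`, contained in `V_1`, with `1 ≤ |K'| ≤ q - p + 1`. -/
theorem stmt15 {V : Type*} [Fintype V] (G : SimpleGraph V)
    (S K : Set V) (hdisj : Disjoint S K) (hcover : S ∪ K = Set.univ)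
    (hS : ∀ u ∈ S, ∀ v ∈ S, ¬ G.Adj u v)
    (hK : G.IsClique K)
    (hmax : ∀ C : Set V, G.IsClique C → C.ncard ≤ K.ncard)
    (hiso : ∀ v : V, ∃ u : V, G.Adj v u)
    (q : ℕ) (hq : q = K.ncard)
    (p : ℕ) (hp1 : 1 ≤ p) (hpq : p ≤ q - 1)
    (P : Fin p → Set V) (hP : TTPartition G p P) :
    ∃ K' : Set V, K' ⊆ K ∧ (∀ s ∈ S, ∃ t ∈ K', G.Adj t s) ∧
      K' ⊆ P ⟨0, hp1⟩ ∧ 1 ≤ K'.ncard ∧ K'.ncard ≤ q - p + 1 :=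
  stmt15_general G S K hcover hS q hq p hp1 P hP
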